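/- For every integer n ≥ 1, the function t ↦ K(t,n) is differentiable on [0,∞) and satisfies (1/λ) ∂K(t,n)/∂t = −(∑_{j=1}^{n} F(j)) K(t,n) + 2 ∑_{i=1}^{n−1} F(n−i) K(t,i) + ∑_{i=1}^{n} f(i) · i · (n+1−i), with boundary condition K(0,n) = 0. -/

import Mathlib

open Finset MeasureTheory intervalIntegral Real Filter

noncomputable section

/-- The CDF `F(k) = ∑_{j=1}^k f(j)` of the bundle-size pmf `f`. -/
def cdfF (f : ℕ → ℝ) (k : ℕ) : ℝ := ∑ j ∈ Finset.Icc 1 k, f j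

/-- `R(t,n)`: the expected number of remaining packages at time `t` starting from `n`
packages on a line, given via its closed-form solution in terms of the constants `γ`. -/
def Rfun (f : ℕ → ℝ) (γ : ℕ → ℕ → ℝ) (lam t : ℝ) (n : ℕ) : ℝ :=
  if 0 < cdfF f n then
    ∑ i ∈ Finset.Icc 1 n, γ n i * Real.exp (-(lam * ∑ j ∈ Finset.Icc 1 i, cdfF f j) * t)
  else (n : ℝ)

/-- `K(t,n) = n - R(t,n)`. -/
def Kfun (f : ℕ → ℝ) (γ : ℕ → ℕ → ℝ) (lam t : ℝ) (n : ℕ) : ℝ :=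
  (n : ℝ) - Rfun f γ lam t n

/-!
Write `S k = ∑_{j ≤ k} F(j)`. The closed form `K(t,i) = i - ∑_{k ≤ i} γ_{i,k} e^{-λ S_k t}` holds
for every `i`, also when `F(i) = 0`, where `γ_{i,k} = 1` and `S_k = 0`. Differentiating gives
`λ ∑_k γ_{n,k} S_k e^{-λ S_k t}`. On the right-hand side, reflecting `i ↦ n - i` and exchanging the
order of summation makes the coefficient of `e^{-λ S_k t}` (for `k < n`) equal to
`2 ∑_{j ≤ n-k} F(j) γ_{n-j,k} = γ_{n,k} (S_n - S_k)` by the recursion for `γ`, which matches the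
derivative. The constant terms cancel by the summation-by-parts identity
`n S_n = 2 ∑_{i ≤ n} (n - i) F(i) + ∑_{i ≤ n} f(i) i (n + 1 - i)`. Finally
`R(0,n) = ∑_i γ_{n,i} = n` by the choice of `γ_{n,n}`.
-/

section CDF

variable {f : ℕ → ℝ}

lemma cdfF_succ (k : ℕ) : cdfF f (k + 1) = cdfF f k + f (k + 1) :=
  sum_Icc_succ_top (by omega) _

lemma ne_zero_of_cdfF_pos {n : ℕ} (h : 0 < cdfF f n) : n ≠ 0 := by
  rintro rfl
  simp [cdfF] at h

lemma cdfF_nonneg (hf : ∀ k, 0 ≤ f k) (k : ℕ) : 0 ≤ cdfF f k :=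
  sum_nonneg fun j _ => hf j

lemma cdfF_mono (hf : ∀ k, 0 ≤ f k) : Monotone (cdfF f) := fun _ _ h =>
  sum_le_sum_of_subset_of_nonneg (Icc_subset_Icc_right h) fun j _ _ => hf j

lemma cdfF_eq_zero_of_le (hf : ∀ k, 0 ≤ f k) {n k : ℕ} (h0 : cdfF f n = 0) (hk : k ≤ n) :
    cdfF f k = 0 :=
  le_antisymm (h0 ▸ cdfF_mono hf hk) (cdfF_nonneg hf k)

lemma sum_cdfF_add_sum_mul_eq (f : ℕ → ℝ) (n : ℕ) :
    ∑ j ∈ Icc 1 n, cdfF f j + ∑ k ∈ Icc 1 n, (k : ℝ) * f k = (n + 1) * cdfF f n := by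
  induction n with
  | zero => simp [cdfF]
  | succ n ih =>
    rw [sum_Icc_succ_top (by omega), sum_Icc_succ_top (by omega), cdfF_succ]
    push_cast
    linear_combination ih

lemma mul_sum_cdfF_eq (f : ℕ → ℝ) (n : ℕ) :
    n * ∑ j ∈ Icc 1 n, cdfF f j
      = 2 * ∑ i ∈ Icc 1 n, ((n : ℝ) - i) * cdfF f i
        + ∑ i ∈ Icc 1 n, f i * i * ((n : ℝ) + 1 - i) := by
  induction n with
  | zero => simp
  | succ n ih =>
    have hcdf_shift : ∑ i ∈ Icc 1 n, (((n + 1 : ℕ) : ℝ) - i) * cdfF f i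
        = ∑ i ∈ Icc 1 n, ((n : ℝ) - i) * cdfF f i + ∑ i ∈ Icc 1 n, cdfF f i := by
      rw [← sum_add_distrib]; exact sum_congr rfl fun i _ => by push_cast; ring
    have hf_shift : ∑ i ∈ Icc 1 n, f i * i * (((n + 1 : ℕ) : ℝ) + 1 - i)
        = ∑ i ∈ Icc 1 n, f i * i * ((n : ℝ) + 1 - i) + ∑ i ∈ Icc 1 n, (i : ℝ) * f i := by
      rw [← sum_add_distrib]; exact sum_congr rfl fun i _ => by push_cast; ring
    have abel := sum_cdfF_add_sum_mul_eq f n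
    rw [sum_Icc_succ_top (by omega), sum_Icc_succ_top (by omega), sum_Icc_succ_top (by omega),
      hcdf_shift, hf_shift, cdfF_succ]
    push_cast
    linear_combination ih - abel

end CDF

lemma sum_Icc_one_reflect {M : Type*} [AddCommMonoid M] (g : ℕ → M) (p : ℕ) :
    ∑ i ∈ Icc 1 p, g i = ∑ i ∈ Icc 1 p, g (p + 1 - i) :=
  sum_nbij' (p + 1 - ·) (p + 1 - ·) (by intro i; simp only [mem_Icc]; omega)
    (by intro i; simp only [mem_Icc]; omega) (by intro i; simp only [mem_Icc]; omega)
    (by intro i; simp only [mem_Icc]; omega)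
    (by intro i; simp only [mem_Icc]; intro hi; rw [Nat.sub_sub_self (by omega)])

section Kolmogorov

variable {f : ℕ → ℝ} {γ : ℕ → ℕ → ℝ} {lam : ℝ}

lemma Kfun_eq_sub_sum (hf : ∀ k, 0 ≤ f k)
    (hγ_zero : ∀ n j : ℕ, cdfF f n = 0 → 1 ≤ j → j ≤ n → γ n j = 1) (t : ℝ) (n : ℕ) :
    Kfun f γ lam t n
      = n - ∑ k ∈ Icc 1 n, γ n k * exp (-(lam * ∑ j ∈ Icc 1 k, cdfF f j) * t) := by
  rw [Kfun, Rfun]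
  split_ifs with hF
  · rfl
  have h0 : cdfF f n = 0 := le_antisymm (not_lt.1 hF) (cdfF_nonneg hf n)
  have hterm : ∀ k ∈ Icc 1 n, γ n k * exp (-(lam * ∑ j ∈ Icc 1 k, cdfF f j) * t) = 1 := by
    intro k hk
    rw [mem_Icc] at hk
    have hS : ∑ j ∈ Icc 1 k, cdfF f j = 0 :=
      sum_eq_zero fun j hj => cdfF_eq_zero_of_le hf h0 ((mem_Icc.1 hj).2.trans hk.2)
    rw [hγ_zero n k h0 hk.1 hk.2, hS]
    simp
  rw [sum_congr rfl hterm]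
  simp

lemma hasDerivAt_Kfun (hf : ∀ k, 0 ≤ f k)
    (hγ_zero : ∀ n j : ℕ, cdfF f n = 0 → 1 ≤ j → j ≤ n → γ n j = 1) (t : ℝ) (n : ℕ) :
    HasDerivAt (fun s => Kfun f γ lam s n)
      (lam * ∑ k ∈ Icc 1 n, γ n k * (∑ j ∈ Icc 1 k, cdfF f j)
        * exp (-(lam * ∑ j ∈ Icc 1 k, cdfF f j) * t)) t := by
  simp_rw [Kfun_eq_sub_sum hf hγ_zero]
  set c : ℕ → ℝ := fun k => lam * ∑ j ∈ Icc 1 k, cdfF f j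
  have hsum : HasDerivAt (fun s => ∑ k ∈ Icc 1 n, γ n k * exp (-c k * s))
      (∑ k ∈ Icc 1 n, γ n k * (exp (-c k * t) * (-c k * 1))) t :=
    HasDerivAt.fun_sum fun k _ => (((hasDerivAt_id t).const_mul _).exp).const_mul (γ n k)
  refine (hsum.const_sub (n : ℝ)).congr_deriv ?_
  rw [← sum_neg_distrib, mul_sum]
  exact sum_congr rfl fun k _ => by ring

lemma gamma_mul_sub_sum_cdfF (hf : ∀ k, 0 ≤ f k)
    (hγ_rec : ∀ n i : ℕ, 0 < cdfF f n → 1 ≤ i → i < n →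
      γ n i = 2 * (∑ j ∈ Icc 1 (n - i), cdfF f j * γ (n - j) i) /
        (∑ k ∈ Icc (i + 1) n, cdfF f k))
    {n k : ℕ} (hF : 0 < cdfF f n) (hk : 1 ≤ k) (hkn : k < n) :
    γ n k * (∑ j ∈ Icc 1 n, cdfF f j - ∑ j ∈ Icc 1 k, cdfF f j)
      = 2 * ∑ j ∈ Icc 1 (n - k), cdfF f j * γ (n - j) k := by
  have hsplit : ∑ j ∈ Icc (k + 1) n, cdfF f j
      = ∑ j ∈ Icc 1 n, cdfF f j - ∑ j ∈ Icc 1 k, cdfF f j := by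
    have := sum_Ioc_consecutive (cdfF f) (Nat.zero_le k) hkn.le
    simp only [← Icc_add_one_left_eq_Ioc, zero_add] at this
    linarith
  have hpos : 0 < ∑ j ∈ Icc (k + 1) n, cdfF f j :=
    hF.trans_le (single_le_sum (fun j _ => cdfF_nonneg hf j) (by simp; omega))
  rw [← hsplit, hγ_rec n k hF hk hkn, div_mul_cancel₀ _ hpos.ne']

lemma sum_cdfF_sub_mul_Kfun_eq (hf : ∀ k, 0 ≤ f k)
    (hγ_zero : ∀ n j : ℕ, cdfF f n = 0 → 1 ≤ j → j ≤ n → γ n j = 1) (t : ℝ) (p : ℕ) :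
    ∑ i ∈ Icc 1 p, cdfF f (p + 1 - i) * Kfun f γ lam t i
      = ∑ i ∈ Icc 1 p, ((p + 1 : ℝ) - i) * cdfF f i
        - ∑ k ∈ Icc 1 p, (∑ j ∈ Icc 1 (p + 1 - k), cdfF f j * γ (p + 1 - j) k)
            * exp (-(lam * ∑ j ∈ Icc 1 k, cdfF f j) * t) := by
  set E : ℕ → ℝ := fun k => exp (-(lam * ∑ j ∈ Icc 1 k, cdfF f j) * t)
  calc ∑ i ∈ Icc 1 p, cdfF f (p + 1 - i) * Kfun f γ lam t i
      = ∑ i ∈ Icc 1 p, cdfF f i * Kfun f γ lam t (p + 1 - i) := by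
        rw [sum_Icc_one_reflect]
        refine sum_congr rfl fun i hi => ?_
        rw [Nat.sub_sub_self (by simp at hi; omega)]
    _ = ∑ i ∈ Icc 1 p, (((p + 1 : ℝ) - i) * cdfF f i
          - ∑ k ∈ Icc 1 (p + 1 - i), cdfF f i * γ (p + 1 - i) k * E k) := by
        refine sum_congr rfl fun i hi => ?_
        rw [Kfun_eq_sub_sum hf hγ_zero, Nat.cast_sub (by simp at hi; omega), mul_sub, mul_sum]
        simp only [mul_assoc]
        push_cast
        ring
    _ = _ := by
        rw [sum_sub_distrib, sum_comm' (t' := Icc 1 p) (s' := fun k => Icc 1 (p + 1 - k))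
          (by intro i k; simp only [mem_Icc]; omega)]
        simp only [sum_mul, E]

lemma sum_gamma_mul_exp_eq_of_cdfF_pos (hf : ∀ k, 0 ≤ f k)
    (hγ_zero : ∀ n j : ℕ, cdfF f n = 0 → 1 ≤ j → j ≤ n → γ n j = 1)
    (hγ_rec : ∀ n i : ℕ, 0 < cdfF f n → 1 ≤ i → i < n →
      γ n i = 2 * (∑ j ∈ Icc 1 (n - i), cdfF f j * γ (n - j) i) /
        (∑ k ∈ Icc (i + 1) n, cdfF f k))
    {n : ℕ} (hF : 0 < cdfF f n) (t : ℝ) :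
    ∑ k ∈ Icc 1 n, γ n k * (∑ j ∈ Icc 1 k, cdfF f j)
        * exp (-(lam * ∑ j ∈ Icc 1 k, cdfF f j) * t)
      = -(∑ j ∈ Icc 1 n, cdfF f j) * Kfun f γ lam t n
        + 2 * ∑ i ∈ Icc 1 (n - 1), cdfF f (n - i) * Kfun f γ lam t i
        + ∑ i ∈ Icc 1 n, f i * (i : ℝ) * ((n : ℝ) + 1 - (i : ℝ)) := by
  obtain ⟨p, rfl⟩ := Nat.exists_eq_add_one_of_ne_zero (ne_zero_of_cdfF_pos hF)
  set S : ℕ → ℝ := fun k => ∑ j ∈ Icc 1 k, cdfF f j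
  set E : ℕ → ℝ := fun k => exp (-(lam * S k) * t)
  have hK := Kfun_eq_sub_sum (lam := lam) hf hγ_zero t
  have hconv := sum_cdfF_sub_mul_Kfun_eq (lam := lam) hf hγ_zero t p
  have hrec : 2 * ∑ k ∈ Icc 1 p, (∑ j ∈ Icc 1 (p + 1 - k), cdfF f j * γ (p + 1 - j) k) * E k
      = S (p + 1) * ∑ k ∈ Icc 1 p, γ (p + 1) k * E k - ∑ k ∈ Icc 1 p, γ (p + 1) k * S k * E k := by
    rw [mul_sum, mul_sum, ← sum_sub_distrib]
    refine sum_congr rfl fun k hk => ?_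
    rw [mem_Icc] at hk
    linear_combination
      (-E k) * gamma_mul_sub_sum_cdfF hf hγ_rec hF hk.1 (by omega : k < p + 1)
  have hkey := mul_sum_cdfF_eq f (p + 1)
  rw [sum_Icc_succ_top (by omega) (fun i : ℕ => (((p + 1 : ℕ) : ℝ) - i) * cdfF f i), sub_self,
    zero_mul, add_zero] at hkey
  have htopL : ∑ k ∈ Icc 1 (p + 1), γ (p + 1) k * S k * E k
      = ∑ k ∈ Icc 1 p, γ (p + 1) k * S k * E k + γ (p + 1) (p + 1) * S (p + 1) * E (p + 1) :=
    sum_Icc_succ_top (by omega) _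
  have htopR : ∑ k ∈ Icc 1 (p + 1), γ (p + 1) k * E k
      = ∑ k ∈ Icc 1 p, γ (p + 1) k * E k + γ (p + 1) (p + 1) * E (p + 1) :=
    sum_Icc_succ_top (by omega) _
  rw [hK, Nat.add_sub_cancel, hconv]
  simp only [S, E] at htopL htopR hrec ⊢
  rw [htopL, htopR]
  push_cast at hkey ⊢
  linear_combination hkey + hrec

lemma sum_gamma_mul_exp_eq_of_cdfF_eq_zero (hf : ∀ k, 0 ≤ f k) {n : ℕ} (h0 : cdfF f n = 0)
    (t : ℝ) :
    ∑ k ∈ Icc 1 n, γ n k * (∑ j ∈ Icc 1 k, cdfF f j)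
        * exp (-(lam * ∑ j ∈ Icc 1 k, cdfF f j) * t)
      = -(∑ j ∈ Icc 1 n, cdfF f j) * Kfun f γ lam t n
        + 2 * ∑ i ∈ Icc 1 (n - 1), cdfF f (n - i) * Kfun f γ lam t i
        + ∑ i ∈ Icc 1 n, f i * (i : ℝ) * ((n : ℝ) + 1 - (i : ℝ)) := by
  have hS : ∀ k ≤ n, ∑ j ∈ Icc 1 k, cdfF f j = 0 := fun k hk =>
    sum_eq_zero fun j hj => cdfF_eq_zero_of_le hf h0 ((mem_Icc.1 hj).2.trans hk)
  have hf0 : ∀ i ∈ Icc 1 n, f i = 0 := (sum_eq_zero_iff_of_nonneg fun j _ => hf j).1 h0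
  rw [hS n le_rfl,
    sum_eq_zero fun k hk => by rw [hS k (mem_Icc.1 hk).2, mul_zero, zero_mul],
    sum_eq_zero fun i _ => by rw [cdfF_eq_zero_of_le hf h0 (n.sub_le i), zero_mul],
    sum_eq_zero fun i hi => by rw [hf0 i hi, zero_mul, zero_mul]]
  ring

lemma sum_gamma_mul_exp_eq (hf : ∀ k, 0 ≤ f k)
    (hγ_zero : ∀ n j : ℕ, cdfF f n = 0 → 1 ≤ j → j ≤ n → γ n j = 1)
    (hγ_rec : ∀ n i : ℕ, 0 < cdfF f n → 1 ≤ i → i < n →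
      γ n i = 2 * (∑ j ∈ Icc 1 (n - i), cdfF f j * γ (n - j) i) /
        (∑ k ∈ Icc (i + 1) n, cdfF f k))
    (n : ℕ) (t : ℝ) :
    ∑ k ∈ Icc 1 n, γ n k * (∑ j ∈ Icc 1 k, cdfF f j)
        * exp (-(lam * ∑ j ∈ Icc 1 k, cdfF f j) * t)
      = -(∑ j ∈ Icc 1 n, cdfF f j) * Kfun f γ lam t n
        + 2 * ∑ i ∈ Icc 1 (n - 1), cdfF f (n - i) * Kfun f γ lam t i
        + ∑ i ∈ Icc 1 n, f i * (i : ℝ) * ((n : ℝ) + 1 - (i : ℝ)) := by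
  rcases (cdfF_nonneg hf n).lt_or_eq' with hF | h0
  · exact sum_gamma_mul_exp_eq_of_cdfF_pos hf hγ_zero hγ_rec hF t
  · exact sum_gamma_mul_exp_eq_of_cdfF_eq_zero hf h0 t

lemma Kfun_zero_left
    (hγ_diag : ∀ n : ℕ, 0 < cdfF f n → γ n n = (n : ℝ) - ∑ i ∈ Icc 1 (n - 1), γ n i) (n : ℕ) :
    Kfun f γ lam 0 n = 0 := by
  rw [Kfun, Rfun]
  split_ifs with hF
  · obtain ⟨p, rfl⟩ := Nat.exists_eq_add_one_of_ne_zero (ne_zero_of_cdfF_pos hF)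
    simp only [mul_zero, exp_zero, mul_one]
    rw [sum_Icc_succ_top (by omega), hγ_diag _ hF, Nat.add_sub_cancel]
    ring
  · exact sub_self _

end Kolmogorov

theorem stmt_1_general
    (f : ℕ → ℝ)
    (hf_nonneg : ∀ k, 0 ≤ f k)
    (lam : ℝ)
    (γ : ℕ → ℕ → ℝ)
    (hγ_zero : ∀ n j : ℕ, cdfF f n = 0 → 1 ≤ j → j ≤ n → γ n j = 1)
    (hγ_rec : ∀ n i : ℕ, 0 < cdfF f n → 1 ≤ i → i < n →
      γ n i = 2 * (∑ j ∈ Finset.Icc 1 (n - i), cdfF f j * γ (n - j) i) /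
        (∑ k ∈ Finset.Icc (i + 1) n, cdfF f k))
    (hγ_diag : ∀ n : ℕ, 0 < cdfF f n →
      γ n n = (n : ℝ) - ∑ i ∈ Finset.Icc 1 (n - 1), γ n i)
    (n : ℕ) :
    (∀ t : ℝ, 0 ≤ t →
      HasDerivAt (fun s => Kfun f γ lam s n)
        (lam * (-(∑ j ∈ Finset.Icc 1 n, cdfF f j) * Kfun f γ lam t n
          + 2 * ∑ i ∈ Finset.Icc 1 (n - 1), cdfF f (n - i) * Kfun f γ lam t i
          + ∑ i ∈ Finset.Icc 1 n, f i * (i : ℝ) * ((n : ℝ) + 1 - (i : ℝ)))) t)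
    ∧ Kfun f γ lam 0 n = 0 := by
  refine ⟨fun t _ => ?_, Kfun_zero_left hγ_diag n⟩
  rw [← sum_gamma_mul_exp_eq hf_nonneg hγ_zero hγ_rec n t]
  exact hasDerivAt_Kfun hf_nonneg hγ_zero t n

/-- For every `n ≥ 1`, `t ↦ K(t,n)` is differentiable on `[0,∞)` and satisfies
`(1/λ) ∂K(t,n)/∂t = -(∑_{j=1}^n F(j)) K(t,n) + 2 ∑_{i=1}^{n-1} F(n-i) K(t,i)
+ ∑_{i=1}^n f(i)·i·(n+1-i)` with `K(0,n) = 0`. -/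
theorem stmt_1
    (m : ℕ) (hm : 1 ≤ m) (f : ℕ → ℝ)
    (hf_nonneg : ∀ k, 0 ≤ f k)
    (hf_sum : ∑ k ∈ Finset.Icc 1 m, f k = 1)
    (hf_supp : ∀ k : ℕ, k = 0 ∨ m < k → f k = 0)
    (lam : ℝ) (hlam : 0 < lam)
    (γ : ℕ → ℕ → ℝ)
    (hγ_zero : ∀ n j : ℕ, cdfF f n = 0 → 1 ≤ j → j ≤ n → γ n j = 1)
    (hγ_rec : ∀ n i : ℕ, 0 < cdfF f n → 1 ≤ i → i < n →
      γ n i = 2 * (∑ j ∈ Finset.Icc 1 (n - i), cdfF f j * γ (n - j) i) /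
        (∑ k ∈ Finset.Icc (i + 1) n, cdfF f k))
    (hγ_diag : ∀ n : ℕ, 0 < cdfF f n →
      γ n n = (n : ℝ) - ∑ i ∈ Finset.Icc 1 (n - 1), γ n i)
    (n : ℕ) (hn : 1 ≤ n) :
    (∀ t : ℝ, 0 ≤ t →
      HasDerivAt (fun s => Kfun f γ lam s n)
        (lam * (-(∑ j ∈ Finset.Icc 1 n, cdfF f j) * Kfun f γ lam t n
          + 2 * ∑ i ∈ Finset.Icc 1 (n - 1), cdfF f (n - i) * Kfun f γ lam t i
          + ∑ i ∈ Finset.Icc 1 n, f i * (i : ℝ) * ((n : ℝ) + 1 - (i : ℝ)))) t)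
    ∧ Kfun f γ lam 0 n = 0 :=
  stmt_1_general f hf_nonneg lam γ hγ_zero hγ_rec hγ_diag n
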